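/- Let p, s ∈ ℝ^n and q, t ∈ ℝ^m be vectors with nonnegative entries such that p ≺ s and q ≺ t. Then the Kronecker (direct) product p ⊗ q ∈ ℝ^{nm}, with entries (p ⊗ q)_{(i,j)} = p_i q_j, satisfies p ⊗ q ≺ s ⊗ t. -/

import Mathlib

/-!
A subset sum of `p ⊗ q` over `A` splits as `∑ⱼ qⱼ · (∑ of p over the j-fibre of A)`. As `qⱼ ≥ 0`,
each fibre sum of `p` may be replaced by a top sum of `s` of the same size, which
trades `p` for `s` without enlarging the index set; with the roles of the factors exchanged
(weights `sᵢ ≥ 0`) `q` is traded for `t`. The resulting subset sum of `s ⊗ t ≥ 0` is at most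
its top sum of the same size. The totals agree since `∑ (p ⊗ q) = (∑ p)(∑ q)`.
-/

open scoped BigOperators ComplexOrder

/-- The descending rearrangement `v↓` of a vector `v ∈ ℝⁿ`. -/
noncomputable def descSort {n : ℕ} (v : Fin n → ℝ) : Fin n → ℝ :=
  fun i => v (Tuple.sort v i.rev)

/-- The sum of the `k` largest entries of `v`. -/
noncomputable def sumTop {n : ℕ} (v : Fin n → ℝ) (k : ℕ) : ℝ :=
  ∑ i ∈ Finset.univ.filter (fun i : Fin n => (i : ℕ) < k), descSort v i

/-- Majorization `v ≺ w`: for every `k`, the sum of the `k` largest entries of `v` is at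
most that of `w`, and the total sums agree. -/
noncomputable def Majorizes {n : ℕ} (v w : Fin n → ℝ) : Prop :=
  (∀ k : ℕ, sumTop v k ≤ sumTop w k) ∧ (∑ i, v i = ∑ i, w i)

/-- Weak majorization `v ≺_w w`: only the partial-sum inequalities are required. -/
noncomputable def WeakMajorizes {n : ℕ} (v w : Fin n → ℝ) : Prop :=
  ∀ k : ℕ, sumTop v k ≤ sumTop w k

/-- The Kronecker (direct) product of two vectors: `(p ⊗ q)_{(i,j)} = p_i q_j`,
realized on `Fin (n * m)` via the standard equivalence `Fin n × Fin m ≃ Fin (n * m)`. -/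
def kron {n m : ℕ} (p : Fin n → ℝ) (q : Fin m → ℝ) : Fin (n * m) → ℝ :=
  fun k => p (finProdFinEquiv.symm k).1 * q (finProdFinEquiv.symm k).2

open Finset

section SumTop

variable {n : ℕ}

lemma descSort_eq_comp (v : Fin n → ℝ) :
    descSort v = v ∘ (Fin.revPerm.trans (Tuple.sort v)) :=
  rfl

lemma descSort_antitone (v : Fin n → ℝ) : Antitone (descSort v) :=
  fun _ _ hij => Tuple.monotone_sort v (Fin.rev_le_rev.mpr hij)

lemma sumTop_succ (v : Fin n → ℝ) {k : ℕ} (hk : k < n) :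
    sumTop v (k + 1) = sumTop v k + descSort v ⟨k, hk⟩ := by
  have : univ.filter (fun i : Fin n => (i : ℕ) < k + 1)
      = insert ⟨k, hk⟩ (univ.filter (fun i : Fin n => (i : ℕ) < k)) := by
    ext i; simp only [mem_filter, mem_univ, true_and, mem_insert, Fin.ext_iff]; omega
  rw [sumTop, this, sum_insert (by simp), add_comm]
  rfl

lemma sum_descSort_le_sumTop (v : Fin n → ℝ) (A : Finset (Fin n)) :
    ∑ i ∈ A, descSort v i ≤ sumTop v #A := by
  induction A using Finset.induction_on_max with
  | empty => simp [sumTop]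
  | insert a A hlt ih =>
    have haA : a ∉ A := fun h => lt_irrefl a (hlt a h)
    have hcard : #A ≤ a := by
      simpa using card_le_card (fun x hx => mem_Iio.mpr (hlt x hx) : A ⊆ Iio a)
    rw [sum_insert haA, card_insert_of_notMem haA, sumTop_succ v (hcard.trans_lt a.2),
      add_comm]
    exact add_le_add ih (descSort_antitone v (Fin.mk_le_of_le_val hcard))

lemma sum_le_sumTop (v : Fin n → ℝ) (A : Finset (Fin n)) : ∑ i ∈ A, v i ≤ sumTop v #A := by
  set σ := Fin.revPerm.trans (Tuple.sort v)
  calc ∑ i ∈ A, v i = ∑ i ∈ A.map σ.symm.toEmbedding, descSort v i := by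
        simp [descSort_eq_comp, σ]
    _ ≤ sumTop v #A := by simpa using sum_descSort_le_sumTop v (A.map σ.symm.toEmbedding)

lemma exists_sum_eq_sumTop (v : Fin n → ℝ) (k : ℕ) :
    ∃ A : Finset (Fin n), #A ≤ k ∧ ∑ i ∈ A, v i = sumTop v k := by
  set σ := Fin.revPerm.trans (Tuple.sort v)
  refine ⟨(univ.filter (fun i : Fin n => (i : ℕ) < k)).map σ.toEmbedding, ?_, ?_⟩
  · simp [Fin.card_filter_val_lt]
  · simp [sumTop, descSort_eq_comp, σ]

lemma sumTop_mono {v : Fin n → ℝ} (hv : ∀ i, 0 ≤ v i) : Monotone (sumTop v) :=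
  fun _ _ hkl => sum_le_sum_of_subset_of_nonneg
    (fun i => by simpa using fun h => h.trans_le hkl) fun i _ _ => hv _

lemma sum_le_sumTop_of_card_le {v : Fin n → ℝ} (hv : ∀ i, 0 ≤ v i) {A : Finset (Fin n)}
    {k : ℕ} (hA : #A ≤ k) : ∑ i ∈ A, v i ≤ sumTop v k :=
  (sum_le_sumTop v A).trans (sumTop_mono hv hA)

end SumTop

section Kronecker

variable {n m : ℕ}

lemma exists_sum_mul_le_of_weakMajorizes {ι : Type*} [Fintype ι] [DecidableEq ι] {a : ι → ℝ}
    (ha : ∀ i, 0 ≤ a i) {u u' : Fin m → ℝ} (huu' : WeakMajorizes u u')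
    (A : Finset (ι × Fin m)) :
    ∃ B : Finset (ι × Fin m), #B ≤ #A ∧
      ∑ x ∈ A, a x.1 * u x.2 ≤ ∑ x ∈ B, a x.1 * u' x.2 := by
  -- `B` replaces each fibre of `A` by a top set of `u'` of at most the same size.
  let fibre (i : ι) : Finset (Fin m) := {j | (i, j) ∈ A}
  choose F hFcard hFsum using fun i => exists_sum_eq_sumTop u' #(fibre i)
  let B : Finset (ι × Fin m) := {x | x.2 ∈ F x.1}
  have hA : ∀ x, x ∈ A ↔ x.1 ∈ univ ∧ x.2 ∈ fibre x.1 := by simp [fibre]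
  have hB : ∀ x, x ∈ B ↔ x.1 ∈ univ ∧ x.2 ∈ F x.1 := by simp [B]
  refine ⟨B, ?_, ?_⟩
  · rw [card_eq_sum_ones A, card_eq_sum_ones B, sum_finset_product A univ fibre hA,
      sum_finset_product B univ F hB]
    simpa using sum_le_sum fun i _ => hFcard i
  · rw [sum_finset_product A univ fibre hA, sum_finset_product B univ F hB]
    refine sum_le_sum fun i _ => ?_
    simp only [← mul_sum, hFsum]
    exact mul_le_mul_of_nonneg_left ((sum_le_sumTop u _).trans (huu' _)) (ha i)

@[simp]
lemma kron_finProdFinEquiv (p : Fin n → ℝ) (q : Fin m → ℝ) (x : Fin n × Fin m) :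
    kron p q (finProdFinEquiv x) = p x.1 * q x.2 := by
  simp [kron]

lemma sum_kron_eq_sum_mul (p : Fin n → ℝ) (q : Fin m → ℝ) (D : Finset (Fin (n * m))) :
    ∑ z ∈ D, kron p q z = ∑ x ∈ D.map finProdFinEquiv.symm.toEmbedding, p x.1 * q x.2 := by
  rw [sum_map]
  rfl

lemma sum_kron (p : Fin n → ℝ) (q : Fin m → ℝ) :
    ∑ z, kron p q z = (∑ i, p i) * ∑ j, q j := by
  rw [← Equiv.sum_comp finProdFinEquiv, sum_mul_sum, Fintype.sum_prod_type]
  simp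

lemma sum_mul_le_sumTop_kron {p s : Fin n → ℝ} {q t : Fin m → ℝ}
    (hs : ∀ i, 0 ≤ s i) (hq : ∀ j, 0 ≤ q j) (ht : ∀ j, 0 ≤ t j)
    (hps : WeakMajorizes p s) (hqt : WeakMajorizes q t) (A : Finset (Fin n × Fin m)) :
    ∑ x ∈ A, p x.1 * q x.2 ≤ sumTop (kron s t) #A := by
  let swap {α β : Type} : α × β ↪ β × α := (Equiv.prodComm α β).toEmbedding
  obtain ⟨B, hBA, hpB⟩ := exists_sum_mul_le_of_weakMajorizes hq hps (A.map swap)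
  obtain ⟨C, hCB, hqC⟩ := exists_sum_mul_le_of_weakMajorizes hs hqt (B.map swap)
  have hC : #(C.map finProdFinEquiv.toEmbedding) ≤ #A := by
    simp only [card_map] at hBA hCB ⊢; omega
  calc ∑ x ∈ A, p x.1 * q x.2 = ∑ x ∈ A.map swap, q x.1 * p x.2 := by
        simp [swap, mul_comm]
    _ ≤ ∑ x ∈ B, q x.1 * s x.2 := hpB
    _ = ∑ x ∈ B.map swap, s x.1 * q x.2 := by simp [swap, mul_comm]
    _ ≤ ∑ x ∈ C, s x.1 * t x.2 := hqC
    _ = ∑ z ∈ C.map finProdFinEquiv.toEmbedding, kron s t z := by simp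
    _ ≤ sumTop (kron s t) #A :=
        sum_le_sumTop_of_card_le (fun z => mul_nonneg (hs _) (ht _)) hC

lemma weakMajorizes_kron {p s : Fin n → ℝ} {q t : Fin m → ℝ}
    (hs : ∀ i, 0 ≤ s i) (hq : ∀ j, 0 ≤ q j) (ht : ∀ j, 0 ≤ t j)
    (hps : WeakMajorizes p s) (hqt : WeakMajorizes q t) :
    WeakMajorizes (kron p q) (kron s t) := by
  intro k
  obtain ⟨D, hDk, hD⟩ := exists_sum_eq_sumTop (kron p q) k
  calc sumTop (kron p q) k
      = ∑ x ∈ D.map finProdFinEquiv.symm.toEmbedding, p x.1 * q x.2 := by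
        rw [← hD, sum_kron_eq_sum_mul]
    _ ≤ sumTop (kron s t) #D := by
        simpa using
          sum_mul_le_sumTop_kron hs hq ht hps hqt (D.map finProdFinEquiv.symm.toEmbedding)
    _ ≤ sumTop (kron s t) k := sumTop_mono (fun z => mul_nonneg (hs _) (ht _)) hDk

end Kronecker

theorem majorizes_kron_general {n m : ℕ} (p s : Fin n → ℝ) (q t : Fin m → ℝ)
    (hs : ∀ i, 0 ≤ s i) (hq : ∀ j, 0 ≤ q j) (ht : ∀ j, 0 ≤ t j)
    (h1 : Majorizes p s) (h2 : Majorizes q t) :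
    Majorizes (kron p q) (kron s t) :=
  ⟨weakMajorizes_kron hs hq ht h1.1 h2.1, by rw [sum_kron, sum_kron, h1.2, h2.2]⟩

/-- If `p ≺ s` (in `ℝⁿ`) and `q ≺ t` (in `ℝᵐ`), all vectors having
nonnegative entries, then the Kronecker product satisfies `p ⊗ q ≺ s ⊗ t`. -/
theorem majorizes_kron {n m : ℕ} (p s : Fin n → ℝ) (q t : Fin m → ℝ)
    (hp : ∀ i, 0 ≤ p i) (hs : ∀ i, 0 ≤ s i) (hq : ∀ j, 0 ≤ q j) (ht : ∀ j, 0 ≤ t j)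
    (h1 : Majorizes p s) (h2 : Majorizes q t) :
    Majorizes (kron p q) (kron s t) :=
  majorizes_kron_general p s q t hs hq ht h1 h2
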